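/- arXiv:2205.08208 — 2 statements merged into one kernel-verified Lean document; each statement's English description precedes it below -/
import Mathlib

section
/- Let Ω be an n×n real symmetric positive definite matrix and let 0 ≤ θ₁ < θ₂ be real numbers such that Ω − θ₂Iₙ is positive definite (hence also Ω − θ₁Iₙ). Then γ(Ω, θ₁) < γ(Ω, θ₂); that is, the map θ ↦ γ(Ω, θ) is strictly increasing on the set {θ ≥ 0 : Ω − θIₙ positive definite}. -/
/-- The function γ(Ω, θ) = (1/2)(tr((I − θΩ⁻¹)⁻¹ − I) + log det(I − θΩ⁻¹)). -/
noncomputable def gammaFn {n : ℕ} (Ω : Matrix (Fin n) (Fin n) ℝ) (θ : ℝ) : ℝ :=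
  (1 / 2) * (Matrix.trace ((1 - θ • Ω⁻¹)⁻¹ - 1) + Real.log ((1 - θ • Ω⁻¹).det))

/-!
Diagonalising `Ω = U diag(μ) Uᴴ` turns `I - θΩ⁻¹` into `U diag(1 - θ/μᵢ) Uᴴ`, so
`2γ(Ω, θ) = ∑ᵢ f(1 - θ/μᵢ)` with `f x = x⁻¹ - 1 + log x`. Since `f' x = (x - 1)/x² < 0` on `(0, 1)`,
`f` is strictly decreasing on `(0, 1]`; and `Ω - θ₂I ≻ 0` forces `θ₂ < μᵢ`, so for `0 ≤ θ₁ < θ₂`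
each argument satisfies `0 < 1 - θ₂/μᵢ < 1 - θ₁/μᵢ ≤ 1`.
-/

open Matrix Unitary

namespace Matrix

variable {n R : Type*} [Fintype n] [DecidableEq n] [CommRing R] [StarRing R]

theorem det_conjStarAlgAut (u : unitaryGroup n R) (A : Matrix n n R) :
    det (conjStarAlgAut R _ u A) = det A := by
  rw [conjStarAlgAut_apply, det_mul, det_mul, mul_right_comm, ← det_mul, ← coe_star,
    coe_mul_star_self, det_one, one_mul]

theorem trace_conjStarAlgAut (u : unitaryGroup n R) (A : Matrix n n R) :
    trace (conjStarAlgAut R _ u A) = trace A := by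
  rw [conjStarAlgAut_apply, trace_mul_cycle, coe_star_mul_self, one_mul]

theorem inv_conjStarAlgAut (u : unitaryGroup n R) (A : Matrix n n R) :
    (conjStarAlgAut R _ u A)⁻¹ = conjStarAlgAut R _ u A⁻¹ := by
  have hu : (u : Matrix n n R)⁻¹ = star u := inv_eq_right_inv (coe_mul_star_self u)
  have hu' : (star u : Matrix n n R)⁻¹ = u := inv_eq_right_inv (coe_star_mul_self u)
  rw [conjStarAlgAut_apply, conjStarAlgAut_apply, mul_inv_rev, mul_inv_rev, hu, hu', coe_star,
    mul_assoc]

theorem inv_diagonal_of_ne_zero {K : Type*} [Field K] {d : n → K} (hd : ∀ i, d i ≠ 0) :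
    (diagonal d)⁻¹ = diagonal d⁻¹ := by
  refine inv_eq_left_inv ?_
  rw [diagonal_mul_diagonal, ← diagonal_one]
  exact congrArg diagonal (funext fun i ↦ inv_mul_cancel₀ (hd i))

end Matrix

namespace Matrix.IsHermitian

variable {n : Type*} [Fintype n] [DecidableEq n] {A : Matrix n n ℝ} (hA : A.IsHermitian)

theorem eq_conjStarAlgAut_diagonal :
    A = conjStarAlgAut ℝ _ hA.eigenvectorUnitary (diagonal hA.eigenvalues) := by
  simpa [RCLike.ofReal_real_eq_id] using hA.spectral_theorem

theorem sub_smul_one_eq_conjStarAlgAut (θ : ℝ) :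
    A - θ • 1 =
      conjStarAlgAut ℝ _ hA.eigenvectorUnitary (diagonal fun i ↦ hA.eigenvalues i - θ) := by
  conv_lhs => rw [hA.eq_conjStarAlgAut_diagonal]
  rw [← map_one (conjStarAlgAut ℝ _ hA.eigenvectorUnitary), ← map_smul, ← map_sub,
    ← diagonal_one, ← diagonal_smul, diagonal_sub]
  simp

theorem lt_eigenvalues_of_posDef_sub_smul_one {θ : ℝ} (h : (A - θ • 1).PosDef) (i : n) :
    θ < hA.eigenvalues i := by
  rw [hA.sub_smul_one_eq_conjStarAlgAut, conjStarAlgAut_apply,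
    isUnit_coe.posDef_star_right_conjugate_iff, posDef_diagonal_iff] at h
  exact sub_pos.mp (h i)

theorem one_sub_smul_inv_eq_conjStarAlgAut (h0 : ∀ i, hA.eigenvalues i ≠ 0) (θ : ℝ) :
    1 - θ • A⁻¹ =
      conjStarAlgAut ℝ _ hA.eigenvectorUnitary (diagonal fun i ↦ 1 - θ / hA.eigenvalues i) := by
  conv_lhs => rw [hA.eq_conjStarAlgAut_diagonal]
  rw [inv_conjStarAlgAut, inv_diagonal_of_ne_zero h0,
    ← map_one (conjStarAlgAut ℝ _ hA.eigenvectorUnitary), ← map_smul, ← map_sub,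
    ← diagonal_one, ← diagonal_smul, diagonal_sub]
  simp [div_eq_mul_inv]

end Matrix.IsHermitian

theorem inv_sub_one_add_log_strictAntiOn :
    StrictAntiOn (fun x : ℝ ↦ x⁻¹ - 1 + Real.log x) (Set.Ioc 0 1) := by
  intro a ⟨ha, _⟩ b ⟨hb, hb1⟩ hab
  have hlog : Real.log b - Real.log a < b / a - 1 := by
    rw [← Real.log_div hb.ne' ha.ne']
    exact Real.log_lt_sub_one_of_pos (div_pos hb ha)
      ((div_eq_one_iff_eq ha.ne').not.mpr hab.ne')
  have hinv : b / a - 1 ≤ a⁻¹ - b⁻¹ := by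
    rw [div_sub_one ha.ne', inv_sub_inv ha.ne' hb.ne', div_le_div_iff₀ ha (by positivity)]
    nlinarith [mul_nonneg (mul_nonneg (sub_nonneg.2 hab.le) ha.le) (sub_nonneg.2 hb1)]
  simp only
  linarith

theorem gammaFn_eq_sum {n : ℕ} {Ω : Matrix (Fin n) (Fin n) ℝ} (hΩ : Ω.IsHermitian) {θ : ℝ}
    (h0 : ∀ i, hΩ.eigenvalues i ≠ 0) (hθ : ∀ i, hΩ.eigenvalues i ≠ θ) :
    gammaFn Ω θ = (1 / 2) * ∑ i, ((1 - θ / hΩ.eigenvalues i)⁻¹ - 1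
      + Real.log (1 - θ / hΩ.eigenvalues i)) := by
  have hw : ∀ i, 1 - θ / hΩ.eigenvalues i ≠ 0 := fun i ↦
    sub_ne_zero.mpr fun h ↦ hθ i ((div_eq_one_iff_eq (h0 i)).mp h.symm).symm
  rw [gammaFn, hΩ.one_sub_smul_inv_eq_conjStarAlgAut h0, inv_conjStarAlgAut,
    inv_diagonal_of_ne_zero hw, ← map_one (conjStarAlgAut ℝ _ hΩ.eigenvectorUnitary), ← map_sub,
    trace_conjStarAlgAut, det_conjStarAlgAut, trace_sub, trace_one, trace_diagonal, det_diagonal,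
    Real.log_prod fun i _ ↦ hw i, Finset.sum_add_distrib, Finset.sum_sub_distrib]
  simp

theorem stmt1 {n : ℕ} (hn : 0 < n) (Ω : Matrix (Fin n) (Fin n) ℝ)
    (hΩ : Ω.PosDef) (θ₁ θ₂ : ℝ) (hθ₁ : 0 ≤ θ₁) (h12 : θ₁ < θ₂)
    (hpd₂ : (Ω - θ₂ • (1 : Matrix (Fin n) (Fin n) ℝ)).PosDef) :
    gammaFn Ω θ₁ < gammaFn Ω θ₂ := by
  have hμ := hΩ.eigenvalues_pos
  have hμ₂ := hΩ.1.lt_eigenvalues_of_posDef_sub_smul_one hpd₂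
  have hμ₁ i : θ₁ < hΩ.1.eigenvalues i := h12.trans (hμ₂ i)
  rw [gammaFn_eq_sum hΩ.1 (fun i ↦ (hμ i).ne') (fun i ↦ (hμ₁ i).ne'),
    gammaFn_eq_sum hΩ.1 (fun i ↦ (hμ i).ne') (fun i ↦ (hμ₂ i).ne')]
  have : Nonempty (Fin n) := Fin.pos_iff_nonempty.mp hn
  refine mul_lt_mul_of_pos_left
    (Finset.sum_lt_sum_of_nonempty Finset.univ_nonempty fun i _ ↦ ?_) one_half_pos
  have hmem {θ : ℝ} (hθ : 0 ≤ θ) (hθμ : θ < hΩ.1.eigenvalues i) :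
      1 - θ / hΩ.1.eigenvalues i ∈ Set.Ioc 0 1 :=
    ⟨sub_pos.mpr ((div_lt_one (hμ i)).mpr hθμ), sub_le_self _ (div_nonneg hθ (hμ i).le)⟩
  exact inv_sub_one_add_log_strictAntiOn (hmem (hθ₁.trans h12.le) (hμ₂ i)) (hmem hθ₁ (hμ₁ i))
    (sub_lt_sub_left (div_lt_div_of_pos_right h12 (hμ i)) 1)
end

section
/- Let X₁ and X₂ be n×n real symmetric positive semidefinite matrices with X₁ ⪯ X₂ (Loewner order) and Iₙ − X₂ positive definite. Then tr((Iₙ − X₁)⁻¹) + log det(Iₙ − X₁) ≤ tr((Iₙ − X₂)⁻¹) + log det(Iₙ − X₂); that is, the map X ↦ tr((Iₙ − X)⁻¹) + log det(Iₙ − X) is monotone nondecreasing in the Loewner order on {X : 0 ⪯ X ≺ Iₙ}. -/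
/-!
With `A = 1 - X₁ = S²` (`S` Hermitian) and `B = 1 - X₂`, the congruence `E = S⁻¹ B S⁻¹` satisfies
`0 < E ≤ 1`, `det B = det A · det E` and `tr B⁻¹ = tr (E⁻¹ A⁻¹)`, so the claim becomes
`tr A⁻¹ ≤ tr (E⁻¹ A⁻¹) + log det E`. Since `1 ≤ E⁻¹` and `1 ≤ A⁻¹`, the trace of the product of
the positive semidefinite matrices `E⁻¹ - 1` and `A⁻¹ - 1` is nonnegative, which leaves
`log det E⁻¹ ≤ tr E⁻¹ - n`: the inequality `log x ≤ x - 1` summed over the eigenvalues of `E⁻¹`.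
-/

open scoped MatrixOrder ComplexOrder

namespace Matrix

variable {n 𝕜 : Type*} [Fintype n] [DecidableEq n] [RCLike 𝕜]

lemma inv_mul_mul_self_mul_inv {α : Type*} [CommRing α] {S : Matrix n n α} (hS : IsUnit S) :
    S⁻¹ * (S * S) * S⁻¹ = 1 := by
  rw [← mul_assoc, nonsing_inv_mul _ ((isUnit_iff_isUnit_det S).mp hS), one_mul,
    mul_nonsing_inv _ ((isUnit_iff_isUnit_det S).mp hS)]

lemma PosDef.exists_isHermitian_isUnit_mul_self_eq {A : Matrix n n 𝕜} (hA : A.PosDef) :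
    ∃ S : Matrix n n 𝕜, S.IsHermitian ∧ IsUnit S ∧ S * S = A :=
  ⟨CFC.sqrt A, (LE.le.posSemidef (CFC.sqrt_nonneg A)).isHermitian,
    (CFC.isUnit_sqrt_iff A hA.posSemidef.nonneg).mpr hA.isUnit,
    CFC.sqrt_mul_sqrt_self A hA.posSemidef.nonneg⟩

lemma PosSemidef.trace_mul_nonneg {A B : Matrix n n 𝕜} (hA : A.PosSemidef) (hB : B.PosSemidef) :
    0 ≤ (A * B).trace := by
  have hS : (CFC.sqrt A).IsHermitian := (LE.le.posSemidef (CFC.sqrt_nonneg A)).isHermitian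
  calc 0 ≤ (CFC.sqrt A * B * CFC.sqrt A).trace := by
        simpa [hS.eq] using (hB.conjTranspose_mul_mul_same (CFC.sqrt A)).trace_nonneg
    _ = (A * B).trace := by rw [trace_mul_cycle, CFC.sqrt_mul_sqrt_self A hA.nonneg]

lemma PosDef.one_le_inv_of_le_one {A : Matrix n n 𝕜} (hA : A.PosDef) (hA1 : A ≤ 1) : 1 ≤ A⁻¹ := by
  obtain ⟨S, hSh, hSu, rfl⟩ := hA.exists_isHermitian_isUnit_mul_self_eq
  simpa [inv_mul_mul_self_mul_inv hSu, mul_inv_rev] using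
    IsSelfAdjoint.conjugate_le_conjugate hA1 hSh.inv.isSelfAdjoint

lemma PosDef.log_det_le_trace_sub_card {A : Matrix n n ℝ} (hA : A.PosDef) :
    Real.log A.det ≤ A.trace - Fintype.card n := by
  have hev := hA.eigenvalues_pos
  rw [hA.isHermitian.det_eq_prod_eigenvalues, hA.isHermitian.trace_eq_sum_eigenvalues]
  simp only [RCLike.ofReal_real_eq_id, id_eq]
  rw [Real.log_prod fun i _ => (hev i).ne', Fintype.card_eq_sum_ones, Nat.cast_sum, Nat.cast_one,
    ← Finset.sum_sub_distrib]
  exact Finset.sum_le_sum fun i _ => Real.log_le_sub_one_of_pos (hev i)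

lemma trace_le_trace_inv_mul_add_log_det {E M : Matrix n n ℝ} (hE : E.PosDef) (hE1 : E ≤ 1)
    (hM : 1 ≤ M) : M.trace ≤ (E⁻¹ * M).trace + Real.log E.det := by
  have hcross : 0 ≤ ((E⁻¹ - 1) * (M - 1)).trace :=
    PosSemidef.trace_mul_nonneg (hE.one_le_inv_of_le_one hE1) hM
  have hlog : Real.log E⁻¹.det ≤ E⁻¹.trace - Fintype.card n := hE.inv.log_det_le_trace_sub_card
  rw [det_nonsing_inv, Ring.inverse_eq_inv', Real.log_inv] at hlog
  have hexpand : ((E⁻¹ - 1) * (M - 1)).trace =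
      (E⁻¹ * M).trace - M.trace - E⁻¹.trace + Fintype.card n := by
    simp only [sub_mul, mul_sub, mul_one, one_mul, trace_sub, trace_one]; ring
  linarith

lemma PosDef.trace_inv_add_log_det_le_of_le {A B : Matrix n n ℝ} (hB : B.PosDef) (hBA : B ≤ A)
    (hA1 : A ≤ 1) : A⁻¹.trace + Real.log A.det ≤ B⁻¹.trace + Real.log B.det := by
  have hA : A.PosDef := by simpa using hB.add_posSemidef hBA
  obtain ⟨S, hSh, hSu, rfl⟩ := hA.exists_isHermitian_isUnit_mul_self_eq
  have hSinv : IsUnit S⁻¹ := isUnit_nonsing_inv_iff.mpr hSu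
  obtain ⟨E, hE_def⟩ : ∃ E, E = S⁻¹ * B * S⁻¹ := ⟨_, rfl⟩
  have hE : E.PosDef := by
    rw [hE_def]
    nth_rw 1 [← hSh.inv.isSelfAdjoint.star_eq]
    exact (IsUnit.posDef_star_left_conjugate_iff hSinv).mpr hB
  have hE1 : E ≤ 1 := by
    simpa [hE_def, inv_mul_mul_self_mul_inv hSu] using
      IsSelfAdjoint.conjugate_le_conjugate hBA hSh.inv.isSelfAdjoint
  have hB_eq : B = S * E * S := by
    have hSdet := (isUnit_iff_isUnit_det S).mp hSu
    rw [hE_def, ← mul_assoc, ← mul_assoc, mul_nonsing_inv _ hSdet, one_mul, mul_assoc,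
      nonsing_inv_mul _ hSdet, mul_one]
  have hdet : B.det = (S * S).det * E.det := by
    rw [hB_eq, det_mul, det_mul, det_mul]; ring
  have htrace : B⁻¹.trace = (E⁻¹ * (S * S)⁻¹).trace := by
    rw [hB_eq, mul_inv_rev, mul_inv_rev, trace_mul_comm, mul_assoc, mul_inv_rev]
  have key := trace_le_trace_inv_mul_add_log_det hE hE1 (hA.one_le_inv_of_le_one hA1)
  rw [hdet, Real.log_mul hA.det_pos.ne' hE.det_pos.ne', htrace]
  linarith

end Matrix

theorem stmt5_general {n : ℕ} (X₁ X₂ : Matrix (Fin n) (Fin n) ℝ)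
    (h₁ : X₁.PosSemidef)
    (h12 : (X₂ - X₁).PosSemidef)
    (hlt : ((1 : Matrix (Fin n) (Fin n) ℝ) - X₂).PosDef) :
    Matrix.trace ((1 - X₁)⁻¹) + Real.log ((1 - X₁).det) ≤
      Matrix.trace ((1 - X₂)⁻¹) + Real.log ((1 - X₂).det) :=
  hlt.trace_inv_add_log_det_le_of_le (sub_le_sub_left h12 1) (sub_le_self 1 h₁.nonneg)

theorem stmt5 {n : ℕ} (X₁ X₂ : Matrix (Fin n) (Fin n) ℝ)
    (h₁ : X₁.PosSemidef) (h₂ : X₂.PosSemidef)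
    (h12 : (X₂ - X₁).PosSemidef)
    (hlt : ((1 : Matrix (Fin n) (Fin n) ℝ) - X₂).PosDef) :
    Matrix.trace ((1 - X₁)⁻¹) + Real.log ((1 - X₁).det) ≤
      Matrix.trace ((1 - X₂)⁻¹) + Real.log ((1 - X₂).det) :=
  stmt5_general X₁ X₂ h₁ h12 hlt
end
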